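/- arXiv:math/0511431 — 4 statements merged into one kernel-verified Lean document; each statement's English description precedes it below -/
import Mathlib

section
/- Let T_n be the number of nilpotent elements of IS_n, and L_n the total number of chains in chain decompositions of all elements of IS_n. Then T_n = L_n / n, i.e., n * T_n = L_n. -/
def IsPInj (n : ℕ) (f : Fin n → Option (Fin n)) : Prop :=
  ∀ a b c, f a = some c → f b = some c → a = b

instance (n : ℕ) : DecidablePred (IsPInj n) := fun _ =>
  inferInstanceAs (Decidable (∀ _ _ _, _ → _ → _))

/-- The symmetric inverse semigroup `IS_n`: partial injective maps on `{1,…,n}`. -/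
def PInj (n : ℕ) := {f : Fin n → Option (Fin n) // IsPInj n f}

instance (n : ℕ) : Fintype (PInj n) := Subtype.fintype _

/-- `iterMap n f k x` is `f^k(x)` as a partial map. -/
def iterMap (n : ℕ) (f : Fin n → Option (Fin n)) : ℕ → Fin n → Option (Fin n)
  | 0, x => some x
  | k + 1, x => (f x).bind (iterMap n f k)

/-- Size of the domain of a partial injection. -/
def domCard (n : ℕ) (α : PInj n) : ℕ :=
  (Finset.univ.filter (fun x => α.val x ≠ none)).card

/-- `α` is nilpotent: some positive power is the empty map. -/
def Nilpotent (n : ℕ) (α : PInj n) : Prop :=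
  ∃ k, 0 < k ∧ ∀ x, iterMap n α.val k x = none

/-- `|IS_m| = ∑_j binom(m,j)^2 j!`. -/
def cardIS (m : ℕ) : ℕ := ∑ j ∈ Finset.range (m + 1), (m.choose j) ^ 2 * j.factorial


/-!
Sort partial injections by their domain `D`. Extending the domain by one point `a`, the image of
`a` may be any point outside the current range, so `n (n-1) ⋯ (n-|D|+1)` partial injections have
domain `D`. A partial injection is nilpotent iff it has no cycle, i.e. it is a disjoint union of
chains, and a nilpotent one stays nilpotent unless `a` is sent to the first point of its own chain;
hence `(n-1)(n-2) ⋯ (n-|D|)` nilpotent ones have domain `D`. Summed over `D`, the identity is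
`n (n-1)(n-2) ⋯ (n-|D|) = (n-|D|) n (n-1) ⋯ (n-|D|+1)`.
-/

open Finset

instance (n : ℕ) : DecidableEq (PInj n) :=
  inferInstanceAs (DecidableEq {f : Fin n → Option (Fin n) // IsPInj n f})

section iterMap

variable {n : ℕ} (f : Fin n → Option (Fin n))

theorem iterMap_add (a b : ℕ) (x : Fin n) :
    iterMap n f (a + b) x = (iterMap n f a x).bind (iterMap n f b) := by
  induction a generalizing x with
  | zero => rw [Nat.zero_add]; rfl
  | succ a ih =>
    rw [Nat.add_right_comm, iterMap, iterMap, Option.bind_assoc]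
    exact congrArg _ (funext ih)

theorem iterMap_one (x : Fin n) : iterMap n f 1 x = f x := by
  simp [iterMap]

theorem iterMap_succ' (k : ℕ) (x : Fin n) :
    iterMap n f (k + 1) x = (iterMap n f k x).bind f := by
  rw [iterMap_add]
  exact congrArg _ (funext (iterMap_one f))

variable {f}

theorem iterMap_eq_none_of_le {k m : ℕ} {x : Fin n} (h : iterMap n f k x = none) (hkm : k ≤ m) :
    iterMap n f m x = none := by
  obtain ⟨r, rfl⟩ := Nat.exists_eq_add_of_le hkm
  rw [iterMap_add, h, Option.bind_none]

theorem iterMap_mul_eq_self {k : ℕ} {x : Fin n} (h : iterMap n f k x = some x) (m : ℕ) :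
    iterMap n f (k * m) x = some x := by
  induction m with
  | zero => rfl
  | succ m ih => rw [Nat.mul_succ, iterMap_add, ih, Option.bind_some, h]

theorem iterMap_mono {g : Fin n → Option (Fin n)} (hfg : ∀ x y, f x = some y → g x = some y)
    {k : ℕ} {x y : Fin n} (h : iterMap n f k x = some y) : iterMap n g k x = some y := by
  induction k generalizing x with
  | zero => exact h
  | succ k ih =>
    rw [iterMap] at h ⊢
    obtain ⟨z, hz, hzy⟩ := Option.bind_eq_some_iff.mp h
    rw [hfg x z hz, Option.bind_some]
    exact ih hzy

theorem iterMap_congr_of_forall_ne {g : Fin n → Option (Fin n)} {a : Fin n}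
    (hfg : ∀ x, x ≠ a → f x = g x) {k : ℕ} {z : Fin n}
    (h : ∀ t < k, iterMap n f t z ≠ some a) : iterMap n g k z = iterMap n f k z := by
  induction k generalizing z with
  | zero => rfl
  | succ k ih =>
    have hz : z ≠ a := fun hza => h 0 k.succ_pos (by rw [hza]; rfl)
    rw [iterMap, iterMap, ← hfg z hz]
    cases hfz : f z with
    | none => rfl
    | some w =>
      refine ih fun t ht => ?_
      simpa [iterMap, hfz] using h (t + 1) (by omega)

theorem exists_iterMap_eq_of_forall_ne {g : Fin n → Option (Fin n)} {a : Fin n}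
    (hfg : ∀ x, x ≠ a → f x = g x) {k : ℕ} {z : Fin n} (h : iterMap n g k z = some a) :
    ∃ j, iterMap n f j z = some a := by
  classical
  have hex : ∃ j, iterMap n g j z = some a := ⟨k, h⟩
  refine ⟨Nat.find hex, ?_⟩
  rw [iterMap_congr_of_forall_ne (fun x hx => (hfg x hx).symm) fun t ht => Nat.find_min hex ht]
  exact Nat.find_spec hex

theorem IsPInj.iterMap (hf : IsPInj n f) (k : ℕ) : IsPInj n (iterMap n f k) := by
  induction k with
  | zero => intro a b c ha hb; exact Option.some_injective _ (ha.trans hb.symm)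
  | succ k ih =>
    intro a b c ha hb
    obtain ⟨ya, hya, ha⟩ := Option.bind_eq_some_iff.mp ha
    obtain ⟨yb, hyb, hb⟩ := Option.bind_eq_some_iff.mp hb
    exact hf a b ya hya (ih ya yb c ha hb ▸ hyb)

end iterMap

section Nilpotent

variable {n : ℕ} {α β : PInj n}

theorem Nilpotent.iterMap_ne_self (h : Nilpotent n α) {k : ℕ} (hk : 0 < k) (x : Fin n) :
    iterMap n α.val k x ≠ some x := by
  intro hx
  obtain ⟨m, -, hm⟩ := h
  have := iterMap_eq_none_of_le (hm x) (Nat.le_mul_of_pos_left m hk)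
  rw [iterMap_mul_eq_self hx] at this
  exact Option.some_ne_none x this

/-- Without cycles, no orbit is defined up to time `n + 1`: by pigeonhole two of its first
`n + 2` points would coincide. -/
theorem nilpotent_of_forall_iterMap_ne_self
    (h : ∀ k, 0 < k → ∀ x, iterMap n α.val k x ≠ some x) : Nilpotent n α := by
  refine ⟨n + 1, n.succ_pos, fun x => ?_⟩
  by_contra hx
  have hmaps : ∀ k ∈ Finset.range (n + 2),
      iterMap n α.val k x ∈ univ.map Function.Embedding.some := by
    intro k hk
    obtain ⟨y, hy⟩ := Option.ne_none_iff_exists'.mp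
      fun hk' => hx (iterMap_eq_none_of_le hk' (Finset.mem_range_succ_iff.mp hk))
    simp [hy]
  obtain ⟨i, hi, j, hj, hij, heq⟩ :=
    exists_ne_map_eq_of_card_lt_of_maps_to (by simp) hmaps
  wlog hlt : i < j generalizing i j
  · exact this j hj i hi hij.symm heq.symm (by omega)
  obtain ⟨y, hy⟩ := Option.ne_none_iff_exists'.mp
    fun hi' => hx (iterMap_eq_none_of_le hi' (Finset.mem_range_succ_iff.mp hi))
  have hcyc : iterMap n α.val (i + (j - i)) x = some y := by
    rw [Nat.add_sub_cancel' hlt.le, ← heq, hy]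
  rw [iterMap_add, hy, Option.bind_some] at hcyc
  exact h (j - i) (by omega) y hcyc

theorem Nilpotent.mono (hβ : Nilpotent n β)
    (hαβ : ∀ x y, α.val x = some y → β.val x = some y) : Nilpotent n α :=
  nilpotent_of_forall_iterMap_ne_self fun _ hk x hx =>
    hβ.iterMap_ne_self hk x (iterMap_mono hαβ hx)

end Nilpotent

namespace PInj

variable {n : ℕ}

theorem ext {α β : PInj n} (h : ∀ x, α.val x = β.val x) : α = β :=
  Subtype.ext (funext h)

def dom (α : PInj n) : Finset (Fin n) := {x | α.val x ≠ none}

def range (α : PInj n) : Finset (Fin n) := {y | ∃ x, α.val x = some y}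

@[simp]
theorem mem_dom {α : PInj n} {x : Fin n} : x ∈ α.dom ↔ α.val x ≠ none := by
  simp [dom]

@[simp]
theorem mem_range {α : PInj n} {y : Fin n} : y ∈ α.range ↔ ∃ x, α.val x = some y := by
  simp [range]

theorem domCard_eq (α : PInj n) : domCard n α = #α.dom := rfl

theorem card_range_eq_card_dom (α : PInj n) : #α.range = #α.dom := by
  refine (card_bij (fun x hx => (α.val x).get (Option.isSome_iff_ne_none.mpr
    (mem_dom.mp hx))) (fun x _ => mem_range.mpr ⟨x, by simp⟩) (fun x _ y _ hxy => ?_)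
    (fun y hy => ?_)).symm
  · exact α.property x y _ (Option.eq_some_of_isSome _) (by rw [hxy]; simp)
  · obtain ⟨x, hx⟩ := mem_range.mp hy
    exact ⟨x, by simp [hx], by simp [hx]⟩

theorem mem_range_of_iterMap {α : PInj n} {k : ℕ} {x y : Fin n} (hk : 0 < k)
    (h : iterMap n α.val k x = some y) : y ∈ α.range := by
  obtain ⟨k, rfl⟩ := Nat.exists_eq_add_of_lt hk
  rw [Nat.zero_add, iterMap_succ'] at h
  obtain ⟨z, -, hz⟩ := Option.bind_eq_some_iff.mp h
  exact mem_range.mpr ⟨z, hz⟩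

def empty (n : ℕ) : PInj n := ⟨fun _ => none, fun _ _ _ h => nomatch h⟩

theorem dom_eq_empty_iff {α : PInj n} : α.dom = ∅ ↔ α = empty n := by
  refine ⟨fun h => ext fun x => ?_, fun h => by simp [h, dom, empty]⟩
  simpa [empty] using eq_empty_iff_forall_notMem.mp h x

theorem nilpotent_empty : Nilpotent n (empty n) := ⟨1, one_pos, fun _ => rfl⟩

def erase (α : PInj n) (a : Fin n) : PInj n :=
  ⟨fun x => if x = a then none else α.val x, fun x y c hx hy => by
    dsimp only at hx hy
    split_ifs at hx hy
    exact α.property x y c hx hy⟩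

theorem erase_val_self (α : PInj n) (a : Fin n) : (α.erase a).val a = none := if_pos rfl

theorem erase_val_of_ne (α : PInj n) {a x : Fin n} (hx : x ≠ a) :
    (α.erase a).val x = α.val x :=
  if_neg hx

theorem dom_erase (α : PInj n) (a : Fin n) : (α.erase a).dom = α.dom.erase a := by
  ext x
  by_cases hx : x = a
  · simp [hx, erase_val_self]
  · simp [hx, erase_val_of_ne]

def extend (α : PInj n) (a v : Fin n) (hv : v ∉ α.range) : PInj n :=
  ⟨Function.update α.val a (some v), fun x y c hx hy => by
    by_cases hxa : x = a <;> by_cases hya : y = a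
    · rw [hxa, hya]
    · simp only [hxa, Function.update_self, Function.update_of_ne hya, Option.some_inj] at hx hy
      exact absurd (mem_range.mpr ⟨y, hx ▸ hy⟩) hv
    · simp only [hya, Function.update_self, Function.update_of_ne hxa, Option.some_inj] at hx hy
      exact absurd (mem_range.mpr ⟨x, hy ▸ hx⟩) hv
    · rw [Function.update_of_ne hxa] at hx
      rw [Function.update_of_ne hya] at hy
      exact α.property x y c hx hy⟩

theorem extend_val_self {α : PInj n} {a v : Fin n} (hv : v ∉ α.range) :
    (α.extend a v hv).val a = some v :=
  Function.update_self ..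

theorem extend_val_of_ne {α : PInj n} {a v x : Fin n} (hv : v ∉ α.range) (hx : x ≠ a) :
    (α.extend a v hv).val x = α.val x :=
  Function.update_of_ne hx ..

theorem erase_extend {α : PInj n} {a v : Fin n} (hv : v ∉ α.range) (ha : α.val a = none) :
    (α.extend a v hv).erase a = α := by
  refine ext fun x => ?_
  by_cases hx : x = a
  · rw [hx, erase_val_self, ha]
  · rw [erase_val_of_ne _ hx, extend_val_of_ne hv hx]

theorem notMem_range_erase {α : PInj n} {a v : Fin n} (h : α.val a = some v) :
    v ∉ (α.erase a).range := by
  rw [mem_range]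
  rintro ⟨x, hx⟩
  by_cases hxa : x = a
  · rw [hxa, erase_val_self] at hx
    simp at hx
  · rw [erase_val_of_ne α hxa] at hx
    exact hxa (α.property x a v hx h)

theorem extend_erase {α : PInj n} {a v : Fin n} (h : α.val a = some v) :
    (α.erase a).extend a v (notMem_range_erase h) = α := by
  refine ext fun x => ?_
  by_cases hx : x = a
  · rw [hx, extend_val_self, h]
  · rw [extend_val_of_ne _ hx, erase_val_of_ne α hx]

/-- The bijection is `α ↦ α a`. -/
theorem card_filter_erase_eq (P : PInj n → Prop) [DecidablePred P] {α' : PInj n} {a : Fin n}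
    (ha : α'.val a = none) :
    #{α | P α ∧ α.erase a = α' ∧ a ∈ α.dom} =
      #{v | ∃ hv : v ∉ α'.range, P (α'.extend a v hv)} := by
  refine card_bij (fun α hα => (α.val a).get (Option.isSome_iff_ne_none.mpr
    (mem_dom.mp (mem_filter.mp hα).2.2.2))) ?_ ?_ ?_
  · rintro α hα
    obtain ⟨hP, rfl, -⟩ := (mem_filter.mp hα).2
    have hv := Option.eq_some_of_isSome (Option.isSome_iff_ne_none.mpr
      (mem_dom.mp (mem_filter.mp hα).2.2.2))
    exact mem_filter.mpr ⟨mem_univ _, notMem_range_erase hv, by rwa [extend_erase hv]⟩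
  · rintro α₁ hα₁ α₂ hα₂ hv
    obtain ⟨-, h₁, -⟩ := (mem_filter.mp hα₁).2
    obtain ⟨-, h₂, -⟩ := (mem_filter.mp hα₂).2
    refine ext fun x => ?_
    by_cases hx : x = a
    · subst hx
      simpa using congrArg some hv
    · rw [← erase_val_of_ne α₁ hx, h₁, ← h₂, erase_val_of_ne α₂ hx]
  · intro v hv
    obtain ⟨hv, hP⟩ := (mem_filter.mp hv).2
    refine ⟨α'.extend a v hv, mem_filter.mpr ⟨mem_univ _, hP, erase_extend hv ha, ?_⟩, ?_⟩ <;>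
      simp [extend_val_self]

theorem card_filter_dom_eq_descFactorial (P : PInj n → Prop) [DecidablePred P] (m : ℕ)
    (hempty : P (empty n)) (herase : ∀ α a, P α → P (α.erase a))
    (hstep : ∀ α' a, P α' → α'.val a = none →
      #{α | P α ∧ α.erase a = α' ∧ a ∈ α.dom} = m - #α'.dom)
    (D : Finset (Fin n)) : #{α | P α ∧ α.dom = D} = m.descFactorial #D := by
  induction D using Finset.induction_on with
  | empty =>
    have hD : ({α | P α ∧ α.dom = ∅} : Finset (PInj n)) = {empty n} := by
      ext α
      simp only [mem_filter, mem_univ, true_and, mem_singleton, dom_eq_empty_iff]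
      exact ⟨And.right, fun h => ⟨h ▸ hempty, h⟩⟩
    rw [hD, card_singleton, card_empty, Nat.descFactorial_zero]
  | insert a s ha ih =>
    have hmaps : ∀ α ∈ ({α | P α ∧ α.dom = insert a s} : Finset (PInj n)),
        α.erase a ∈ ({α | P α ∧ α.dom = s} : Finset (PInj n)) := by
      intro α hα
      obtain ⟨hP, hdom⟩ := (mem_filter.mp hα).2
      refine mem_filter.mpr ⟨mem_univ _, herase α a hP, ?_⟩
      rw [dom_erase, hdom, erase_insert ha]
    have hfiber : ∀ α' ∈ ({α | P α ∧ α.dom = s} : Finset (PInj n)),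
        #{α ∈ ({α | P α ∧ α.dom = insert a s} : Finset (PInj n)) | α.erase a = α'} =
          m - #s := by
      intro α' hα'
      obtain ⟨hP', rfl⟩ := (mem_filter.mp hα').2
      rw [← hstep α' a hP' (by simpa using ha), filter_filter]
      congr 1
      ext α
      simp only [mem_filter, mem_univ, true_and]
      constructor
      · rintro ⟨⟨hP, hdom⟩, rfl⟩
        exact ⟨hP, rfl, hdom ▸ mem_insert_self a _⟩
      · rintro ⟨hP, rfl, haα⟩
        exact ⟨⟨hP, by rw [dom_erase, insert_erase haα]⟩, rfl⟩
    rw [card_eq_sum_card_fiberwise hmaps, sum_congr rfl hfiber, sum_const, smul_eq_mul, ih,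
      card_insert_of_notMem ha, Nat.descFactorial_succ, mul_comm]

theorem card_filter_dom_eq (D : Finset (Fin n)) :
    #{α : PInj n | α.dom = D} = n.descFactorial #D := by
  simpa using card_filter_dom_eq_descFactorial (fun _ => True) n trivial (fun _ _ _ => trivial)
    (fun α' a _ ha => by
      rw [card_filter_erase_eq _ ha, ← card_range_eq_card_dom]
      convert card_compl α'.range using 2
      · ext v
        simp
      · simp) D

end PInj

section Chains

open PInj

variable {n : ℕ} {α : PInj n}

theorem Nilpotent.erase (h : Nilpotent n α) (a : Fin n) :
    Nilpotent n (α.erase a) :=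
  h.mono fun x y hxy => by
    by_cases hx : x = a
    · simp [hx, erase_val_self] at hxy
    · rwa [erase_val_of_ne α hx] at hxy

theorem Nilpotent.exists_source (h : Nilpotent n α) (a : Fin n) :
    ∃ s ∉ α.range, ∃ j, iterMap n α.val j s = some a := by
  by_contra hc
  push Not at hc
  have hback : ∀ k, ∃ v, iterMap n α.val k v = some a := by
    intro k
    induction k with
    | zero => exact ⟨a, rfl⟩
    | succ k ih =>
      obtain ⟨v, hv⟩ := ih
      obtain ⟨u, hu⟩ := mem_range.mp (not_not.mp fun hv' => hc v hv' k hv)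
      exact ⟨u, by rw [iterMap, hu, Option.bind_some, hv]⟩
  obtain ⟨k, -, hk⟩ := h
  obtain ⟨v, hv⟩ := hback k
  simp [hk v] at hv

theorem PInj.eq_of_iterMap_eq_some_of_notMem_range {s s' a : Fin n} (hs : s ∉ α.range)
    (hs' : s' ∉ α.range) {j j' : ℕ} (h : iterMap n α.val j s = some a)
    (h' : iterMap n α.val j' s' = some a) : s = s' := by
  wlog hjj : j ≤ j' generalizing s s' j j'
  · exact (this hs' hs h' h (by omega)).symm
  obtain ⟨d, rfl⟩ := Nat.exists_eq_add_of_le hjj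
  rw [Nat.add_comm, iterMap_add] at h'
  obtain ⟨w, hw, hwa⟩ := Option.bind_eq_some_iff.mp h'
  obtain rfl : w = s := α.property.iterMap j w s a hwa h
  rcases Nat.eq_zero_or_pos d with rfl | hd
  · exact (Option.some_injective _ hw).symm
  · exact absurd (mem_range_of_iterMap hd hw) hs

theorem Nilpotent.nilpotent_extend_iff (h : Nilpotent n α) {a v : Fin n} (ha : α.val a = none)
    (hv : v ∉ α.range) :
    Nilpotent n (α.extend a v hv) ↔ ∀ j, iterMap n α.val j v ≠ some a := by
  have hagree : ∀ x, x ≠ a → α.val x = (α.extend a v hv).val x :=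
    fun x hx => (extend_val_of_ne hv hx).symm
  constructor
  · intro hext j hj
    refine hext.iterMap_ne_self j.succ_pos a ?_
    rw [iterMap, extend_val_self, Option.bind_some]
    refine iterMap_mono (fun x y hxy => ?_) hj
    rwa [← hagree x (by rintro rfl; simp [ha] at hxy)]
  · intro hreach
    refine nilpotent_of_forall_iterMap_ne_self fun k hk z hz => ?_
    by_cases hpass : ∃ t < k, iterMap n (α.extend a v hv).val t z = some a
    · obtain ⟨t, -, hta⟩ := hpass
      -- rotating the cycle through `z` gives a cycle through `a`, hence a path from `v` to `a`
      have hcyc : iterMap n (α.extend a v hv).val k a = some a := by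
        have e₁ := iterMap_add (α.extend a v hv).val t k z
        have e₂ := iterMap_add (α.extend a v hv).val k t z
        rw [hta, Option.bind_some] at e₁
        rw [hz, Option.bind_some, hta] at e₂
        rw [← e₁, Nat.add_comm, e₂]
      obtain ⟨k, rfl⟩ := Nat.exists_eq_add_of_lt hk
      rw [Nat.zero_add, iterMap, extend_val_self, Option.bind_some] at hcyc
      obtain ⟨j, hj⟩ := exists_iterMap_eq_of_forall_ne hagree hcyc
      exact hreach j hj
    · push Not at hpass
      refine h.iterMap_ne_self hk z ?_
      rwa [iterMap_congr_of_forall_ne (fun x hx => (hagree x hx).symm) hpass]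

open Classical in
theorem Nilpotent.card_filter_erase_eq {α' : PInj n} (h : Nilpotent n α') {a : Fin n}
    (ha : α'.val a = none) :
    #{α | Nilpotent n α ∧ α.erase a = α' ∧ a ∈ α.dom} = n - 1 - #α'.dom := by
  obtain ⟨s, hs, j, hj⟩ := h.exists_source a
  have hvalues :
      ({v | ∃ hv : v ∉ α'.range, Nilpotent n (α'.extend a v hv)} : Finset (Fin n)) =
        (insert s α'.range)ᶜ := by
    ext v
    simp only [mem_filter, mem_univ, true_and, mem_compl, mem_insert, not_or]
    constructor
    · rintro ⟨hv, hnil⟩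
      exact ⟨fun hvs => (h.nilpotent_extend_iff ha hv).mp hnil j (hvs ▸ hj), hv⟩
    · rintro ⟨hvs, hv⟩
      exact ⟨hv, (h.nilpotent_extend_iff ha hv).mpr fun j' hj' =>
        hvs (eq_of_iterMap_eq_some_of_notMem_range hv hs hj' hj)⟩
  rw [PInj.card_filter_erase_eq _ ha, hvalues, card_compl, card_insert_of_notMem hs,
    card_range_eq_card_dom, Fintype.card_fin]
  omega

open Classical in
theorem PInj.card_filter_nilpotent_dom_eq (D : Finset (Fin n)) :
    #{α : PInj n | Nilpotent n α ∧ α.dom = D} = (n - 1).descFactorial #D :=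
  card_filter_dom_eq_descFactorial _ _ nilpotent_empty (fun _ a h => h.erase a)
    (fun _ _ h ha => h.card_filter_erase_eq ha) D

end Chains

theorem Nat.mul_sub_one_descFactorial (n k : ℕ) :
    n * (n - 1).descFactorial k = (n - k) * n.descFactorial k := by
  cases n with
  | zero => simp
  | succ m => rw [Nat.add_sub_cancel, ← Nat.succ_descFactorial_succ, Nat.descFactorial_succ]

theorem stmt15 (n : ℕ) :
    n * Set.ncard {α : PInj n | Nilpotent n α} = ∑ α : PInj n, (n - domCard n α) := by
  classical
  have hnil : Set.ncard {α : PInj n | Nilpotent n α} =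
      ∑ D : Finset (Fin n), (n - 1).descFactorial #D := by
    rw [← coe_filter_univ, Set.ncard_coe_finset,
      card_eq_sum_card_fiberwise (f := PInj.dom) (t := univ) fun _ _ => mem_univ _]
    simp_rw [filter_filter, PInj.card_filter_nilpotent_dom_eq]
  have hall : ∑ α : PInj n, (n - domCard n α) =
      ∑ D : Finset (Fin n), (n - #D) * n.descFactorial #D := by
    simp only [PInj.domCard_eq]
    rw [← sum_fiberwise' univ PInj.dom fun D => n - #D]
    simp_rw [sum_const, smul_eq_mul, PInj.card_filter_dom_eq, mul_comm]
  rw [hnil, hall, mul_sum]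
  exact sum_congr rfl fun D _ => Nat.mul_sub_one_descFactorial n #D
end

section
/- Let L^(n) denote the total number of chains in the chain decompositions of all nilpotent elements of IS_n. Then |IS_n| = L^(n+1)/(n+1), i.e., (n+1)*|IS_n| = L^(n+1). -/
/-!
Double counting the pairs `(α, x)` with `α` nilpotent and `x ∉ dom α` turns the right-hand side
into `∑ x, #{α nilpotent | α x = none}`, and conjugating by the transposition of `x` with the top
element `⊤` shows that each summand equals the one for `x = ⊤`. Partial injections of `Fin n` are
those of `Fin (n + 1)` fixing `⊤`, and a version of Foata's fundamental transformation
(`joinCycles`) maps them bijectively onto the nilpotent ones undefined at `⊤`: cut every cycle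
just before its maximum and concatenate the resulting chains, in increasing order of maxima, into
a single chain ending at `⊤` (the fixed point `⊤` is the last cycle). The inverse (`splitChain`)
cuts the chain through `⊤` before each of its left-to-right maxima and closes up the pieces.
-/

open Finset Relation

noncomputable section

open scoped Classical

namespace PInj

section Orbits

variable {N : ℕ} {f g : Fin N → Option (Fin N)}

def Reach (f : Fin N → Option (Fin N)) : Fin N → Fin N → Prop :=
  ReflTransGen fun a b => f a = some b

def OnCycle (f : Fin N → Option (Fin N)) (x : Fin N) : Prop :=
  TransGen (fun a b => f a = some b) x x

theorem Reach.refl (x : Fin N) : Reach f x x := ReflTransGen.refl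

theorem Reach.trans {x y z : Fin N} : Reach f x y → Reach f y z → Reach f x z :=
  ReflTransGen.trans

theorem Reach.head {x y z : Fin N} (h : f x = some y) : Reach f y z → Reach f x z :=
  ReflTransGen.head h

theorem Reach.tail {x y z : Fin N} : Reach f x y → f y = some z → Reach f x z :=
  ReflTransGen.tail

theorem reach_of_apply {x y : Fin N} (h : f x = some y) : Reach f x y := ReflTransGen.single h

theorem reach_of_iterMap {k : ℕ} {x y : Fin N} (h : iterMap N f k x = some y) : Reach f x y := by
  induction k generalizing x with
  | zero => cases h; exact Reach.refl _
  | succ k ih =>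
    obtain ⟨x', hx', h'⟩ := Option.bind_eq_some_iff.mp h
    exact Reach.head hx' (ih h')

theorem iterMap_add (k l : ℕ) (x : Fin N) :
    iterMap N f (k + l) x = (iterMap N f k x).bind (iterMap N f l) := by
  induction k generalizing x with
  | zero => simp [iterMap]
  | succ k ih =>
    rw [Nat.succ_add]
    cases hx : f x <;> simp [iterMap, hx, ih]

theorem iterMap_eq_none_of_le {k l : ℕ} {x : Fin N} (h : iterMap N f k x = none) (hkl : k ≤ l) :
    iterMap N f l x = none := by
  rw [← Nat.add_sub_cancel' hkl, iterMap_add, h, Option.bind_none]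

theorem OnCycle.exists_apply {x : Fin N} (hx : OnCycle f x) :
    ∃ y, f x = some y ∧ OnCycle f y ∧ Reach f y x := by
  obtain ⟨y, hxy, hyx⟩ := TransGen.head'_iff.mp hx
  exact ⟨y, hxy, TransGen.tail' hyx hxy, hyx⟩

theorem onCycle_of_iterMap {k : ℕ} {x : Fin N} (h : iterMap N f (k + 1) x = some x) :
    OnCycle f x := by
  obtain ⟨y, hxy, hyx⟩ := Option.bind_eq_some_iff.mp h
  exact TransGen.head' hxy (reach_of_iterMap hyx)

theorem OnCycle.of_reach {x y : Fin N} (hx : OnCycle f x) (h : Reach f x y) :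
    OnCycle f y ∧ Reach f y x := by
  induction h with
  | refl => exact ⟨hx, Reach.refl x⟩
  | tail _ hbc ih =>
    obtain ⟨c', hc', hcyc, hback⟩ := ih.1.exists_apply
    cases hbc.symm.trans hc'
    exact ⟨hcyc, hback.trans ih.2⟩

theorem OnCycle.exists_iterMap {x : Fin N} (hx : OnCycle f x) (k : ℕ) :
    ∃ y, iterMap N f k x = some y := by
  induction k generalizing x with
  | zero => exact ⟨x, rfl⟩
  | succ k ih =>
    obtain ⟨y, hxy, hy, -⟩ := hx.exists_apply
    simpa [iterMap, hxy] using ih hy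

theorem OnCycle.of_apply (hf : IsPInj N f) {z w : Fin N} (hzw : f z = some w)
    (hw : OnCycle f w) : OnCycle f z := by
  obtain ⟨q, hwq, hqw⟩ := TransGen.tail'_iff.mp hw
  cases hf q z w hqw hzw
  exact TransGen.head' hzw hwq

theorem Reach.total (hf : IsPInj N f) {x y z : Fin N} (hx : Reach f x z) (hy : Reach f y z) :
    Reach f x y ∨ Reach f y x := by
  induction hx generalizing y with
  | refl => exact Or.inr hy
  | tail hxp hpz ih =>
    rcases ReflTransGen.cases_tail hy with rfl | ⟨q, hyq, hqz⟩
    · exact Or.inl (hxp.tail hpz)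
    · cases hf _ _ _ hqz hpz
      exact ih hyq

theorem eq_or_reach_of_reach_apply (hf : IsPInj N f) {w z u : Fin N} (hzu : f z = some u)
    (h : Reach f w u) : w = u ∨ Reach f w z := by
  rcases ReflTransGen.cases_tail h with rfl | ⟨q, hwq, hqu⟩
  · exact Or.inl rfl
  · cases hf _ _ _ hqu hzu
    exact Or.inr hwq

theorem Reach.of_eqOn_compl {C : Fin N → Prop} (hgf : ∀ a, ¬ C a → g a = f a)
    (hC : ∀ a b, f a = some b → C b → C a) {a b : Fin N} (h : Reach g a b) (ha : ¬ C a) :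
    Reach f a b ∧ ¬ C b := by
  induction h using ReflTransGen.head_induction_on with
  | refl => exact ⟨Reach.refl _, ha⟩
  | head hac _ ih =>
    rw [hgf _ ha] at hac
    have hc := fun hc => ha (hC _ _ hac hc)
    exact ⟨Reach.head hac (ih hc).1, (ih hc).2⟩

theorem OnCycle.of_eqOn_compl {C : Fin N → Prop} (hgf : ∀ a, ¬ C a → g a = f a)
    (hC : ∀ a b, f a = some b → C b → C a) {a : Fin N} (h : OnCycle g a) (ha : ¬ C a) :
    OnCycle f a := by
  obtain ⟨c, hac, -, hca⟩ := h.exists_apply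
  rw [hgf _ ha] at hac
  exact TransGen.head' hac (hca.of_eqOn_compl hgf hC fun hc => ha (hC _ _ hac hc)).1

theorem nilpotent_iff_forall_not_onCycle (α : PInj N) :
    Nilpotent N α ↔ ∀ x, ¬ OnCycle α.val x := by
  constructor
  · rintro ⟨k, -, hk⟩ x hx
    obtain ⟨y, hy⟩ := hx.exists_iterMap k
    rw [hk x] at hy
    cases hy
  · intro hnc
    refine ⟨N + 1, N.succ_pos, fun x => ?_⟩
    obtain ⟨i, j, hij, heq⟩ := Fintype.exists_ne_map_eq_of_card_lt
      (fun i : Fin (N + 2) => iterMap N α.val i x) (by simp)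
    wlog hlt : i < j generalizing i j
    · exact this j i hij.symm heq.symm (lt_of_le_of_ne (not_lt.mp hlt) hij.symm)
    cases hi : iterMap N α.val i x with
    | none => exact iterMap_eq_none_of_le hi (by omega)
    | some y =>
      have hj : iterMap N α.val j x = some y := heq ▸ hi
      rw [← Nat.add_sub_cancel' hlt.le, iterMap_add, hi, Option.bind_some,
        ← Nat.sub_add_cancel (Nat.sub_pos_of_lt hlt)] at hj
      exact absurd (onCycle_of_iterMap hj) (hnc y)

def cycleMax (f : Fin N → Option (Fin N)) (x : Fin N) : Fin N :=
  (univ.filter (Reach f x)).max' ⟨x, mem_filter.mpr ⟨mem_univ x, Reach.refl x⟩⟩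

theorem le_cycleMax {x y : Fin N} (h : Reach f x y) : y ≤ cycleMax f x :=
  le_max' _ y (mem_filter.mpr ⟨mem_univ y, h⟩)

theorem reach_cycleMax (f : Fin N → Option (Fin N)) (x : Fin N) : Reach f x (cycleMax f x) :=
  (mem_filter.mp (max'_mem _ _)).2

theorem OnCycle.cycleMax_eq {x y : Fin N} (hx : OnCycle f x) (h : Reach f x y) :
    cycleMax f y = cycleMax f x :=
  le_antisymm (le_cycleMax (h.trans (reach_cycleMax f y)))
    (le_cycleMax ((hx.of_reach h).2.trans (reach_cycleMax f x)))

def IsCycleMax (f : Fin N → Option (Fin N)) (w : Fin N) : Prop :=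
  OnCycle f w ∧ cycleMax f w = w

theorem OnCycle.isCycleMax_cycleMax {x : Fin N} (hx : OnCycle f x) :
    IsCycleMax f (cycleMax f x) :=
  ⟨(hx.of_reach (reach_cycleMax f x)).1, hx.cycleMax_eq (reach_cycleMax f x)⟩

theorem IsCycleMax.eq_of_reach {w y : Fin N} (hw : IsCycleMax f w) (hy : IsCycleMax f y)
    (h : Reach f w y) : y = w := by
  rw [← hy.2, hw.1.cycleMax_eq h, hw.2]

def nextCycleMax (f : Fin N → Option (Fin N)) (w : Fin N) : Option (Fin N) :=
  if h : (univ.filter fun M => IsCycleMax f M ∧ w < M).Nonempty then some (min' _ h) else none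

theorem nextCycleMax_eq_some_iff {w M : Fin N} :
    nextCycleMax f w = some M ↔
      IsCycleMax f M ∧ w < M ∧ ∀ M', IsCycleMax f M' → w < M' → M ≤ M' := by
  unfold nextCycleMax
  split_ifs with h
  · simp only [Option.some.injEq]
    constructor
    · rintro rfl
      exact ⟨(mem_filter.mp (min'_mem _ h)).2.1, (mem_filter.mp (min'_mem _ h)).2.2,
        fun M' hM' hlt => min'_le _ _ (mem_filter.mpr ⟨mem_univ _, hM', hlt⟩)⟩
    · rintro ⟨hM, hlt, hmin⟩
      exact le_antisymm (min'_le _ _ (mem_filter.mpr ⟨mem_univ _, hM, hlt⟩))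
        (hmin _ (mem_filter.mp (min'_mem _ h)).2.1 (mem_filter.mp (min'_mem _ h)).2.2)
  · simp only [false_iff]
    rintro ⟨hM, hlt, -⟩
    exact h ⟨M, mem_filter.mpr ⟨mem_univ _, hM, hlt⟩⟩

theorem nextCycleMax_eq_none_iff {w : Fin N} :
    nextCycleMax f w = none ↔ ∀ M, IsCycleMax f M → M ≤ w := by
  unfold nextCycleMax
  split_ifs with h
  · simp only [false_iff, not_forall, not_le]
    obtain ⟨M, hM⟩ := h
    exact ⟨M, (mem_filter.mp hM).2.1, (mem_filter.mp hM).2.2⟩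
  · simp only [true_iff]
    intro M hM
    by_contra hlt
    exact h ⟨M, mem_filter.mpr ⟨mem_univ _, hM, not_le.mp hlt⟩⟩

theorem le_of_nextCycleMax_eq {w₁ w₂ c : Fin N} (h₁ : nextCycleMax f w₁ = some c)
    (h₂ : nextCycleMax f w₂ = some c) (hw₂ : IsCycleMax f w₂) : w₂ ≤ w₁ := by
  by_contra hlt
  obtain ⟨-, -, hmin⟩ := nextCycleMax_eq_some_iff.mp h₁
  obtain ⟨-, hlt₂, -⟩ := nextCycleMax_eq_some_iff.mp h₂
  exact absurd (hmin w₂ hw₂ (not_le.mp hlt)) (not_le.mpr hlt₂)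

def maxAncestor (f : Fin N → Option (Fin N)) (x : Fin N) : Fin N :=
  (univ.filter fun w => Reach f w x).max' ⟨x, mem_filter.mpr ⟨mem_univ x, Reach.refl x⟩⟩

theorem le_maxAncestor {w x : Fin N} (h : Reach f w x) : w ≤ maxAncestor f x :=
  le_max' _ w (mem_filter.mpr ⟨mem_univ w, h⟩)

theorem reach_maxAncestor (f : Fin N → Option (Fin N)) (x : Fin N) :
    Reach f (maxAncestor f x) x :=
  (mem_filter.mp (max'_mem (univ.filter fun w => Reach f w x) _)).2

theorem maxAncestor_mono {x y : Fin N} (h : Reach f x y) : maxAncestor f x ≤ maxAncestor f y :=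
  le_maxAncestor ((reach_maxAncestor f x).trans h)

theorem maxAncestor_maxAncestor (x : Fin N) :
    maxAncestor f (maxAncestor f x) = maxAncestor f x :=
  le_antisymm (le_maxAncestor ((reach_maxAncestor f _).trans (reach_maxAncestor f x)))
    (le_maxAncestor (Reach.refl _))

theorem maxAncestor_of_apply (hf : IsPInj N f) {z u : Fin N} (h : f z = some u) :
    maxAncestor f u = max (maxAncestor f z) u := by
  refine le_antisymm ?_ (max_le (maxAncestor_mono (reach_of_apply h))
    (le_maxAncestor (Reach.refl u)))
  rcases eq_or_reach_of_reach_apply hf h (reach_maxAncestor f u) with hu | hz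
  · rw [hu]
    exact le_max_right _ _
  · exact le_max_of_le_left (le_maxAncestor hz)

def joinCycles (f : Fin N → Option (Fin N)) (z : Fin N) : Option (Fin N) :=
  (f z).bind fun w => if IsCycleMax f w then nextCycleMax f w else some w

theorem joinCycles_of_isCycleMax {z w : Fin N} (h : f z = some w) (hw : IsCycleMax f w) :
    joinCycles f z = nextCycleMax f w := by
  simp [joinCycles, h, hw]

theorem joinCycles_of_not_isCycleMax {z w : Fin N} (h : f z = some w) (hw : ¬ IsCycleMax f w) :
    joinCycles f z = some w := by
  simp [joinCycles, h, hw]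

theorem joinCycles_of_not_onCycle (hf : IsPInj N f) {z : Fin N} (hz : ¬ OnCycle f z) :
    joinCycles f z = f z := by
  cases h : f z with
  | none => simp [joinCycles, h]
  | some w => exact joinCycles_of_not_isCycleMax h fun hw => hz (hw.1.of_apply hf h)

theorem isPInj_joinCycles (hf : IsPInj N f) : IsPInj N (joinCycles f) := by
  intro z₁ z₂ c h₁ h₂
  obtain ⟨w₁, hw₁, -⟩ := Option.bind_eq_some_iff.mp h₁
  obtain ⟨w₂, hw₂, -⟩ := Option.bind_eq_some_iff.mp h₂
  suffices w₁ = w₂ from hf _ _ _ hw₁ (this ▸ hw₂)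
  by_cases hm₁ : IsCycleMax f w₁ <;> by_cases hm₂ : IsCycleMax f w₂
  · rw [joinCycles_of_isCycleMax hw₁ hm₁] at h₁
    rw [joinCycles_of_isCycleMax hw₂ hm₂] at h₂
    exact le_antisymm (le_of_nextCycleMax_eq h₂ h₁ hm₁) (le_of_nextCycleMax_eq h₁ h₂ hm₂)
  · rw [joinCycles_of_isCycleMax hw₁ hm₁] at h₁
    rw [joinCycles_of_not_isCycleMax hw₂ hm₂, Option.some_inj] at h₂
    exact absurd (h₂ ▸ (nextCycleMax_eq_some_iff.mp h₁).1) hm₂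
  · rw [joinCycles_of_not_isCycleMax hw₁ hm₁, Option.some_inj] at h₁
    rw [joinCycles_of_isCycleMax hw₂ hm₂] at h₂
    exact absurd (h₁ ▸ (nextCycleMax_eq_some_iff.mp h₂).1) hm₁
  · rw [joinCycles_of_not_isCycleMax hw₁ hm₁] at h₁
    rw [joinCycles_of_not_isCycleMax hw₂ hm₂] at h₂
    exact Option.some_inj.mp (h₁.trans h₂.symm)

theorem OnCycle.joinCycles_apply {z y : Fin N} (hz : OnCycle f z) (h : joinCycles f z = some y) :
    OnCycle f y ∧ cycleMax f z ≤ cycleMax f y := by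
  obtain ⟨w, hzw, hw, -⟩ := hz.exists_apply
  have hzw' : cycleMax f w = cycleMax f z := hz.cycleMax_eq (reach_of_apply hzw)
  by_cases hmw : IsCycleMax f w
  · rw [joinCycles_of_isCycleMax hzw hmw] at h
    obtain ⟨hy, hlt, -⟩ := nextCycleMax_eq_some_iff.mp h
    rw [← hzw', hmw.2, hy.2]
    exact ⟨hy.1, hlt.le⟩
  · rw [joinCycles_of_not_isCycleMax hzw hmw, Option.some_inj] at h
    subst h
    exact ⟨hw, hzw'.ge⟩

theorem OnCycle.cycleMax_le_of_reach_joinCycles {z y : Fin N} (hz : OnCycle f z)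
    (h : Reach (joinCycles f) z y) : OnCycle f y ∧ cycleMax f z ≤ cycleMax f y := by
  induction h with
  | refl => exact ⟨hz, le_rfl⟩
  | tail _ hbc ih =>
    have := ih.1.joinCycles_apply hbc
    exact ⟨this.1, ih.2.trans this.2⟩

theorem IsCycleMax.reach_joinCycles {M z : Fin N} (hM : IsCycleMax f M) (h : Reach f M z) :
    Reach (joinCycles f) M z := by
  induction h with
  | refl => exact Reach.refl M
  | @tail p q hMp hpq ih =>
    by_cases hq : IsCycleMax f q
    · rw [hM.eq_of_reach hq (Reach.tail hMp hpq)]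
      exact Reach.refl M
    · exact ih.tail (joinCycles_of_not_isCycleMax hpq hq)

theorem OnCycle.exists_reach_joinCycles_apply_eq_cycleMax {z : Fin N} (hz : OnCycle f z) :
    ∃ p, Reach (joinCycles f) z p ∧ f p = some (cycleMax f z) := by
  obtain ⟨y, hzy, -, hyz⟩ := hz.exists_apply
  suffices ∀ M y, Reach f y M → ∀ z, OnCycle f z → f z = some y → cycleMax f z = M →
      ∃ p, Reach (joinCycles f) z p ∧ f p = some M from
    this _ y (hyz.trans (reach_cycleMax f z)) z hz hzy rfl
  intro M y hy
  induction hy using ReflTransGen.head_induction_on with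
  | refl => exact fun z _ hzy _ => ⟨z, Reach.refl z, hzy⟩
  | @head y y' hyy' _ ih =>
    intro z hz hzy hzM
    have hyc : OnCycle f y := (hz.of_reach (reach_of_apply hzy)).1
    have hyM : cycleMax f y = M := (hz.cycleMax_eq (reach_of_apply hzy)).trans hzM
    by_cases hmy : IsCycleMax f y
    · rw [← hyM, hmy.2]
      exact ⟨z, Reach.refl z, hzy⟩
    · obtain ⟨p, hyp, hp⟩ := ih y hyc hyy' hyM
      exact ⟨p, Reach.head (joinCycles_of_not_isCycleMax hzy hmy) hyp, hp⟩

theorem reach_of_reach_joinCycles (hf : IsPInj N f) {a b : Fin N}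
    (h : Reach (joinCycles f) a b) (ha : ¬ OnCycle f a) : Reach f a b ∧ ¬ OnCycle f b :=
  h.of_eqOn_compl (fun _ => joinCycles_of_not_onCycle hf) (fun _ _ hab hb => hb.of_apply hf hab) ha

theorem OnCycle.maxAncestor_joinCycles (hf : IsPInj N f) {z : Fin N}
    (hz : OnCycle f z) : maxAncestor (joinCycles f) z = cycleMax f z := by
  refine le_antisymm ?_ (le_maxAncestor (hz.isCycleMax_cycleMax.reach_joinCycles
    (hz.of_reach (reach_cycleMax f z)).2))
  have h := reach_maxAncestor (joinCycles f) z
  have hw : OnCycle f (maxAncestor (joinCycles f) z) := by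
    by_contra hw
    exact (reach_of_reach_joinCycles hf h hw).2 hz
  exact (le_cycleMax (Reach.refl _)).trans (hw.cycleMax_le_of_reach_joinCycles h).2

end Orbits

section Top

variable {m : ℕ} {f g : Fin (m + 1) → Option (Fin (m + 1))}

theorem isCycleMax_last (htop : f (Fin.last m) = some (Fin.last m)) :
    IsCycleMax f (Fin.last m) :=
  ⟨TransGen.single htop, le_antisymm (Fin.le_last _) (le_cycleMax (Reach.refl _))⟩

theorem joinCycles_last (htop : f (Fin.last m) = some (Fin.last m)) :
    joinCycles f (Fin.last m) = none := by
  rw [joinCycles_of_isCycleMax htop (isCycleMax_last htop)]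
  exact nextCycleMax_eq_none_iff.mpr fun M _ => Fin.le_last M

theorem OnCycle.reach_joinCycles_last (hf : IsPInj (m + 1) f)
    (htop : f (Fin.last m) = some (Fin.last m)) {z : Fin (m + 1)} (hz : OnCycle f z) :
    Reach (joinCycles f) z (Fin.last m) := by
  suffices ∀ M z, OnCycle f z → cycleMax f z = M → Reach (joinCycles f) z (Fin.last m) from
    this _ z hz rfl
  intro M
  induction M using WellFoundedGT.induction with
  | _ M ih =>
    intro z hz hzM
    obtain ⟨p, hzp, hp⟩ := hz.exists_reach_joinCycles_apply_eq_cycleMax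
    cases h : nextCycleMax f (cycleMax f z) with
    | none =>
      have hlast : cycleMax f z = Fin.last m := le_antisymm (Fin.le_last _)
        (nextCycleMax_eq_none_iff.mp h _ (isCycleMax_last htop))
      rw [hlast] at hp
      exact hf _ _ _ hp htop ▸ hzp
    | some M' =>
      obtain ⟨hM', hlt, -⟩ := nextCycleMax_eq_some_iff.mp h
      rw [← joinCycles_of_isCycleMax hp hz.isCycleMax_cycleMax] at h
      exact hzp.trans (Reach.head h (ih M' (hzM ▸ hlt) M' hM'.1 hM'.2))

theorem reach_joinCycles_last_iff (hf : IsPInj (m + 1) f)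
    (htop : f (Fin.last m) = some (Fin.last m)) {z : Fin (m + 1)} :
    Reach (joinCycles f) z (Fin.last m) ↔ OnCycle f z := by
  refine ⟨fun h => ?_, fun hz => hz.reach_joinCycles_last hf htop⟩
  by_contra hz
  exact (reach_of_reach_joinCycles hf h hz).2 (isCycleMax_last htop).1

theorem not_onCycle_joinCycles (hf : IsPInj (m + 1) f)
    (htop : f (Fin.last m) = some (Fin.last m)) (z : Fin (m + 1)) :
    ¬ OnCycle (joinCycles f) z := by
  intro h
  by_cases hz : OnCycle f z
  · obtain ⟨y, hy, -⟩ := (h.of_reach (hz.reach_joinCycles_last hf htop)).1.exists_apply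
    rw [joinCycles_last htop] at hy
    cases hy
  · exact hz (h.of_eqOn_compl (fun _ => joinCycles_of_not_onCycle hf)
      (fun _ _ hab hb => hb.of_apply hf hab) hz)

/-- `maxAncestor g u = u` says that `u` is a left-to-right maximum of the chain through the top. -/
def IsBlockEnd (g : Fin (m + 1) → Option (Fin (m + 1))) (z : Fin (m + 1)) : Prop :=
  Reach g z (Fin.last m) ∧ ∀ u ∈ g z, maxAncestor g u = u

def splitChain (g : Fin (m + 1) → Option (Fin (m + 1))) (z : Fin (m + 1)) : Option (Fin (m + 1)) :=
  if IsBlockEnd g z then some (maxAncestor g z) else g z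

theorem splitChain_of_isBlockEnd {z : Fin (m + 1)} (h : IsBlockEnd g z) :
    splitChain g z = some (maxAncestor g z) := if_pos h

theorem splitChain_of_not_isBlockEnd {z : Fin (m + 1)} (h : ¬ IsBlockEnd g z) :
    splitChain g z = g z := if_neg h

theorem maxAncestor_last : maxAncestor g (Fin.last m) = Fin.last m :=
  le_antisymm (Fin.le_last _) (le_maxAncestor (Reach.refl _))

theorem splitChain_last (hlast : g (Fin.last m) = none) :
    splitChain g (Fin.last m) = some (Fin.last m) := by
  rw [splitChain_of_isBlockEnd ⟨Reach.refl _, by simp [hlast]⟩, maxAncestor_last]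

theorem reach_last_of_apply (hlast : g (Fin.last m) = none) {z u : Fin (m + 1)}
    (hz : Reach g z (Fin.last m)) (h : g z = some u) : Reach g u (Fin.last m) := by
  rcases ReflTransGen.cases_head hz with rfl | ⟨c, hzc, hc⟩
  · rw [hlast] at h
    cases h
  · exact Option.some_inj.mp (hzc.symm.trans h) ▸ hc

theorem isBlockEnd_of_apply {y u : Fin (m + 1)} (h : g y = some u)
    (hu : Reach g u (Fin.last m)) (hmax : maxAncestor g u = u) : IsBlockEnd g y :=
  ⟨Reach.head h hu, fun _ hu' => Option.some_inj.mp (h.symm.trans hu') ▸ hmax⟩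

theorem maxAncestor_lt_of_isBlockEnd (hg : IsPInj (m + 1) g) (hnc : ∀ x, ¬ OnCycle g x)
    {z u : Fin (m + 1)} (hz : IsBlockEnd g z) (h : g z = some u) : maxAncestor g z < u := by
  have hu : u = max (maxAncestor g z) u := (hz.2 u h).symm.trans (maxAncestor_of_apply hg h)
  refine lt_of_le_of_ne ((le_max_left _ _).trans hu.ge) fun heq => hnc z ?_
  exact TransGen.head' h (heq ▸ reach_maxAncestor g z)

theorem exists_apply_of_not_isBlockEnd (hg : IsPInj (m + 1) g) {z : Fin (m + 1)}
    (hz : Reach g z (Fin.last m)) (hb : ¬ IsBlockEnd g z) :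
    ∃ u, g z = some u ∧ maxAncestor g u = maxAncestor g z := by
  obtain ⟨u, hu, hne⟩ : ∃ u ∈ g z, maxAncestor g u ≠ u := by
    simpa [IsBlockEnd, hz] using hb
  refine ⟨u, hu, ?_⟩
  rw [maxAncestor_of_apply hg hu] at hne ⊢
  rcases max_choice (maxAncestor g z) u with h | h <;> rw [h] at hne ⊢
  exact absurd rfl hne

theorem IsBlockEnd.eq_of_reach {z₁ z₂ : Fin (m + 1)} (h₁ : IsBlockEnd g z₁)
    (hg : IsPInj (m + 1) g) (hnc : ∀ x, ¬ OnCycle g x) (h : Reach g z₁ z₂)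
    (heq : maxAncestor g z₁ = maxAncestor g z₂) : z₁ = z₂ := by
  rcases ReflTransGen.cases_head h with h | ⟨u, hu, huz⟩
  · exact h
  · exact absurd (le_maxAncestor huz) (heq ▸ maxAncestor_lt_of_isBlockEnd hg hnc h₁ hu).not_ge

theorem isPInj_splitChain (hg : IsPInj (m + 1) g) (hnc : ∀ x, ¬ OnCycle g x) :
    IsPInj (m + 1) (splitChain g) := by
  have mixed : ∀ {z₁ z₂ c}, IsBlockEnd g z₁ → ¬ IsBlockEnd g z₂ →
      splitChain g z₁ = some c → splitChain g z₂ = some c → False := by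
    intro z₁ z₂ c hb₁ hb₂ h₁ h₂
    rw [splitChain_of_isBlockEnd hb₁, Option.some_inj] at h₁
    rw [splitChain_of_not_isBlockEnd hb₂, ← h₁] at h₂
    exact hb₂ (isBlockEnd_of_apply h₂ ((reach_maxAncestor g z₁).trans hb₁.1)
      (maxAncestor_maxAncestor z₁))
  intro z₁ z₂ c h₁ h₂
  by_cases hb₁ : IsBlockEnd g z₁ <;> by_cases hb₂ : IsBlockEnd g z₂
  · rw [splitChain_of_isBlockEnd hb₁] at h₁
    rw [splitChain_of_isBlockEnd hb₂] at h₂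
    have heq := Option.some_inj.mp (h₁.trans h₂.symm)
    rcases Reach.total hg hb₁.1 hb₂.1 with h | h
    · exact hb₁.eq_of_reach hg hnc h heq
    · exact (hb₂.eq_of_reach hg hnc h heq.symm).symm
  · exact (mixed hb₁ hb₂ h₁ h₂).elim
  · exact (mixed hb₂ hb₁ h₂ h₁).elim
  · rw [splitChain_of_not_isBlockEnd hb₁] at h₁
    rw [splitChain_of_not_isBlockEnd hb₂] at h₂
    exact hg _ _ _ h₁ h₂

theorem reach_splitChain_maxAncestor (hg : IsPInj (m + 1) g) {z : Fin (m + 1)}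
    (hz : Reach g z (Fin.last m)) : Reach (splitChain g) z (maxAncestor g z) := by
  induction hz using ReflTransGen.head_induction_on with
  | refl => rw [maxAncestor_last]; exact Reach.refl _
  | @head z u hzu hu ih =>
    by_cases hb : IsBlockEnd g z
    · exact reach_of_apply (splitChain_of_isBlockEnd hb)
    · obtain ⟨u', hu', hmax⟩ := exists_apply_of_not_isBlockEnd hg (Reach.head hzu hu) hb
      cases hzu.symm.trans hu'
      exact hmax ▸ Reach.head ((splitChain_of_not_isBlockEnd hb).trans hzu) ih

theorem reach_splitChain_of_reach {x y : Fin (m + 1)} (h : Reach g x y)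
    (hy : maxAncestor g y = x) : Reach (splitChain g) x y := by
  induction h with
  | refl => exact Reach.refl x
  | @tail p y hxp hpy ih =>
    have hp : maxAncestor g p = x := le_antisymm
      ((maxAncestor_mono (reach_of_apply hpy)).trans hy.le) (le_maxAncestor hxp)
    by_cases hb : IsBlockEnd g p
    · rw [← hy, hb.2 y hpy]
      exact Reach.refl y
    · exact (ih hp).tail ((splitChain_of_not_isBlockEnd hb).trans hpy)

theorem exists_splitChain_apply (hg : IsPInj (m + 1) g) {z : Fin (m + 1)}
    (hlast : g (Fin.last m) = none) (hz : Reach g z (Fin.last m)) :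
    ∃ y, splitChain g z = some y ∧ Reach g y (Fin.last m) ∧ maxAncestor g y = maxAncestor g z := by
  by_cases hb : IsBlockEnd g z
  · exact ⟨_, splitChain_of_isBlockEnd hb, (reach_maxAncestor g z).trans hz,
      maxAncestor_maxAncestor z⟩
  · obtain ⟨u, hu, hmax⟩ := exists_apply_of_not_isBlockEnd hg hz hb
    exact ⟨u, (splitChain_of_not_isBlockEnd hb).trans hu, reach_last_of_apply hlast hz hu, hmax⟩

theorem reach_of_reach_splitChain (hg : IsPInj (m + 1) g) (hlast : g (Fin.last m) = none)
    {z v : Fin (m + 1)} (h : Reach (splitChain g) z v) (hz : Reach g z (Fin.last m)) :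
    Reach g v (Fin.last m) ∧ maxAncestor g v = maxAncestor g z := by
  induction h with
  | refl => exact ⟨hz, rfl⟩
  | tail _ hbc ih =>
    obtain ⟨y, hy, hyl, hmax⟩ := exists_splitChain_apply hg hlast ih.1
    cases hbc.symm.trans hy
    exact ⟨hyl, hmax.trans ih.2⟩

theorem onCycle_splitChain_iff (hg : IsPInj (m + 1) g) (hnc : ∀ x, ¬ OnCycle g x)
    (hlast : g (Fin.last m) = none) {z : Fin (m + 1)} :
    OnCycle (splitChain g) z ↔ Reach g z (Fin.last m) := by
  constructor
  · intro h
    by_contra hz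
    exact hnc z (h.of_eqOn_compl (fun _ ha => splitChain_of_not_isBlockEnd fun hb => ha hb.1)
      (fun _ _ hab hb => Reach.head hab hb) hz)
  · intro hz
    obtain ⟨y, hy, hyl, hmax⟩ := exists_splitChain_apply hg hlast hz
    refine TransGen.head' hy ((reach_splitChain_maxAncestor hg hyl).trans ?_)
    exact hmax ▸ reach_splitChain_of_reach (reach_maxAncestor g z) rfl

theorem cycleMax_splitChain (hg : IsPInj (m + 1) g) (hlast : g (Fin.last m) = none)
    {z : Fin (m + 1)} (hz : Reach g z (Fin.last m)) :
    cycleMax (splitChain g) z = maxAncestor g z := by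
  refine le_antisymm ?_ (le_cycleMax (reach_splitChain_maxAncestor hg hz))
  have := reach_of_reach_splitChain hg hlast (reach_cycleMax (splitChain g) z) hz
  exact this.2 ▸ le_maxAncestor (Reach.refl _)

theorem isCycleMax_splitChain_iff (hg : IsPInj (m + 1) g) (hnc : ∀ x, ¬ OnCycle g x)
    (hlast : g (Fin.last m) = none) {w : Fin (m + 1)} :
    IsCycleMax (splitChain g) w ↔ Reach g w (Fin.last m) ∧ maxAncestor g w = w := by
  rw [IsCycleMax, onCycle_splitChain_iff hg hnc hlast]
  exact and_congr_right fun hw => by rw [cycleMax_splitChain hg hlast hw]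

theorem splitChain_joinCycles {f : Fin (m + 1) → Option (Fin (m + 1))} (hf : IsPInj (m + 1) f)
    (htop : f (Fin.last m) = some (Fin.last m)) : splitChain (joinCycles f) = f := by
  funext z
  have reach_iff := reach_joinCycles_last_iff hf htop (z := z)
  cases hz : f z with
  | none =>
    have hb : ¬ IsBlockEnd (joinCycles f) z := fun hb => by
      obtain ⟨w, hw, -⟩ := (reach_iff.mp hb.1).exists_apply
      rw [hz] at hw
      cases hw
    rw [splitChain_of_not_isBlockEnd hb]
    simp [joinCycles, hz]
  | some w =>
    by_cases hw : IsCycleMax f w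
    · have hzc : OnCycle f z := hw.1.of_apply hf hz
      have hb : IsBlockEnd (joinCycles f) z := by
        refine ⟨reach_iff.mpr hzc, fun u hu => ?_⟩
        rw [joinCycles_of_isCycleMax hz hw] at hu
        have hu := (nextCycleMax_eq_some_iff.mp hu).1
        rw [hu.1.maxAncestor_joinCycles hf, hu.2]
      rw [splitChain_of_isBlockEnd hb, hzc.maxAncestor_joinCycles hf,
        ← hzc.cycleMax_eq (reach_of_apply hz), hw.2]
    · have hb : ¬ IsBlockEnd (joinCycles f) z := fun hb => by
        have hwc : OnCycle f w := ((reach_iff.mp hb.1).of_reach (reach_of_apply hz)).1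
        have := hb.2 w (joinCycles_of_not_isCycleMax hz hw)
        exact hw ⟨hwc, hwc.maxAncestor_joinCycles hf ▸ this⟩
      rw [splitChain_of_not_isBlockEnd hb, joinCycles_of_not_isCycleMax hz hw]

theorem joinCycles_splitChain {g : Fin (m + 1) → Option (Fin (m + 1))} (hg : IsPInj (m + 1) g)
    (hnc : ∀ x, ¬ OnCycle g x) (hlast : g (Fin.last m) = none) :
    joinCycles (splitChain g) = g := by
  funext z
  have cycleMax_iff := fun w => isCycleMax_splitChain_iff hg hnc hlast (w := w)
  by_cases hb : IsBlockEnd g z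
  · rw [joinCycles_of_isCycleMax (splitChain_of_isBlockEnd hb) ((cycleMax_iff _).mpr
      ⟨(reach_maxAncestor g z).trans hb.1, maxAncestor_maxAncestor z⟩)]
    cases hz : g z with
    | none =>
      obtain rfl : z = Fin.last m := by
        rcases ReflTransGen.cases_head hb.1 with h | ⟨c, hc, -⟩
        · exact h
        · rw [hz] at hc
          cases hc
      rw [maxAncestor_last]
      exact nextCycleMax_eq_none_iff.mpr fun M _ => Fin.le_last M
    | some u =>
      refine nextCycleMax_eq_some_iff.mpr ⟨(cycleMax_iff u).mpr
        ⟨reach_last_of_apply hlast hb.1 hz, hb.2 u hz⟩,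
        maxAncestor_lt_of_isBlockEnd hg hnc hb hz, fun M hM hlt => ?_⟩
      -- a left-to-right maximum `M` beyond `maxAncestor g z` must lie downstream of `u`
      obtain ⟨hMl, hMM⟩ := (cycleMax_iff M).mp hM
      rcases Reach.total hg hMl hb.1 with hMz | hzM
      · exact absurd (le_maxAncestor hMz) hlt.not_ge
      · rcases ReflTransGen.cases_head hzM with rfl | ⟨u', hu', hu'M⟩
        · exact absurd (le_maxAncestor (Reach.refl z)) hlt.not_ge
        · cases hz.symm.trans hu'
          exact hMM ▸ le_maxAncestor hu'M
  · cases hz : g z with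
    | none => simp [joinCycles, splitChain_of_not_isBlockEnd hb, hz]
    | some u =>
      refine joinCycles_of_not_isCycleMax ((splitChain_of_not_isBlockEnd hb).trans hz) fun hu => ?_
      obtain ⟨hul, huu⟩ := (cycleMax_iff u).mp hu
      exact hb (isBlockEnd_of_apply hz hul huu)

def joinCyclesEquiv (m : ℕ) :
    {f : PInj (m + 1) // f.val (Fin.last m) = some (Fin.last m)} ≃
      {α : PInj (m + 1) // Nilpotent (m + 1) α ∧ α.val (Fin.last m) = none} where
  toFun f := ⟨⟨joinCycles f.1.1, isPInj_joinCycles f.1.2⟩,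
    (nilpotent_iff_forall_not_onCycle _).mpr (not_onCycle_joinCycles f.1.2 f.2),
    joinCycles_last f.2⟩
  invFun α := ⟨⟨splitChain α.1.1, isPInj_splitChain α.1.2
      ((nilpotent_iff_forall_not_onCycle _).mp α.2.1)⟩, splitChain_last α.2.2⟩
  left_inv f := Subtype.ext (Subtype.ext (splitChain_joinCycles f.1.2 f.2))
  right_inv α := Subtype.ext (Subtype.ext (joinCycles_splitChain α.1.2
    ((nilpotent_iff_forall_not_onCycle _).mp α.2.1) α.2.2))

end Top

variable {m N : ℕ}

def extendLast (b : Fin m → Option (Fin m)) : Fin (m + 1) → Option (Fin (m + 1)) :=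
  Fin.lastCases (some (Fin.last m)) fun z => (b z).map Fin.castSucc

def restrictLast (f : Fin (m + 1) → Option (Fin (m + 1))) (z : Fin m) : Option (Fin m) :=
  (f z.castSucc).bind (Fin.lastCases none some)

theorem restrictLast_eq_some_iff {f : Fin (m + 1) → Option (Fin (m + 1))} {z c : Fin m} :
    restrictLast f z = some c ↔ f z.castSucc = some c.castSucc := by
  rw [restrictLast, Option.bind_eq_some_iff]
  constructor
  · rintro ⟨d, hd, hdc⟩
    induction d using Fin.lastCases <;> simp_all
  · intro h
    exact ⟨_, h, by simp⟩

def extendLastEquiv (m : ℕ) :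
    PInj m ≃ {f : PInj (m + 1) // f.val (Fin.last m) = some (Fin.last m)} where
  toFun b := ⟨⟨extendLast b.val, fun x y c => by
    induction x using Fin.lastCases <;> induction y using Fin.lastCases <;>
      simp [extendLast] <;> grind [IsPInj, b.2, Fin.castSucc_inj]⟩, by simp [extendLast]⟩
  invFun f := ⟨restrictLast f.1.val, fun z₁ z₂ c h₁ h₂ => Fin.castSucc_injective m
    (f.1.2 _ _ _ (restrictLast_eq_some_iff.mp h₁) (restrictLast_eq_some_iff.mp h₂))⟩
  left_inv b := by
    apply Subtype.ext
    funext z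
    cases h : b.val z <;> simp [restrictLast, extendLast, h]
  right_inv f := by
    apply Subtype.ext
    apply Subtype.ext
    funext x
    induction x using Fin.lastCases with
    | last => simpa [extendLast] using f.2.symm
    | cast z =>
      simp only [extendLast, Fin.lastCases_castSucc]
      cases h : f.1.val z.castSucc with
      | none => simp [restrictLast, h]
      | some d =>
        induction d using Fin.lastCases with
        | last => exact absurd (f.1.2 _ _ _ h f.2) (Fin.castSucc_ne_last z)
        | cast c => simp [restrictLast_eq_some_iff.mpr h]

def conj (σ : Equiv.Perm (Fin N)) (α : PInj N) : PInj N :=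
  ⟨fun v => (α.val (σ.symm v)).map σ, fun a b c ha hb => by
    obtain ⟨a', ha', rfl⟩ := Option.map_eq_some_iff.mp ha
    obtain ⟨b', hb', hb'c⟩ := Option.map_eq_some_iff.mp hb
    cases σ.injective hb'c
    exact σ.symm.injective (α.2 _ _ _ ha' hb')⟩

theorem conj_apply_eq_some_iff {σ : Equiv.Perm (Fin N)} {α : PInj N} {a b : Fin N} :
    (conj σ α).val a = some b ↔ α.val (σ.symm a) = some (σ.symm b) := by
  simp [conj, Option.map_eq_some_iff, ← Equiv.eq_symm_apply]

def conjEquiv (σ : Equiv.Perm (Fin N)) : PInj N ≃ PInj N where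
  toFun := conj σ
  invFun := conj σ.symm
  left_inv α := Subtype.ext (funext fun v => by cases h : α.val v <;> simp [conj, h])
  right_inv α := Subtype.ext (funext fun v => by cases h : α.val v <;> simp [conj, h])

theorem onCycle_conj_iff {σ : Equiv.Perm (Fin N)} {α : PInj N} {x : Fin N} :
    OnCycle (conj σ α).val (σ x) ↔ OnCycle α.val x := by
  constructor
  · intro h
    simpa [Function.onFun, OnCycle] using TransGen.lift (p := fun a b => α.val a = some b) σ.symm
      (fun _ _ h => conj_apply_eq_some_iff.mp h) _ _ h
  · exact TransGen.lift σ (fun _ _ h => conj_apply_eq_some_iff.mpr (by simpa using h)) _ _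

theorem nilpotent_conj_iff {σ : Equiv.Perm (Fin N)} {α : PInj N} :
    Nilpotent N (conj σ α) ↔ Nilpotent N α := by
  simp only [nilpotent_iff_forall_not_onCycle]
  constructor
  · exact fun h x hx => h (σ x) (onCycle_conj_iff.mpr hx)
  · intro h y hy
    exact h (σ.symm y) ((onCycle_conj_iff (σ := σ)).mp (by simpa using hy))

theorem card_nilpotent_apply_eq_none (x : Fin (m + 1)) :
    Fintype.card {α : PInj (m + 1) // Nilpotent (m + 1) α ∧ α.val x = none} =
      Fintype.card (PInj m) := by
  let σ := Equiv.swap x (Fin.last m)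
  have e := (conjEquiv σ).subtypeEquiv (p := fun α => Nilpotent (m + 1) α ∧ α.val x = none)
      (q := fun α => Nilpotent (m + 1) α ∧ α.val (Fin.last m) = none) fun α => by
    rw [show Fin.last m = σ x from (Equiv.swap_apply_left _ _).symm]
    change _ ↔ Nilpotent (m + 1) (conj σ α) ∧ (conj σ α).val (σ x) = none
    rw [nilpotent_conj_iff]
    simp [conj]
  exact (Fintype.card_congr (e.trans (joinCyclesEquiv m).symm)).trans
    (Fintype.card_congr (extendLastEquiv m)).symm

end PInj

theorem sub_domCard_eq_card_filter (N : ℕ) (α : PInj N) :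
    N - domCard N α = #(univ.filter fun x => α.val x = none) := by
  have h := card_filter_add_card_filter_not (s := univ) (fun x => α.val x ≠ none)
  simp only [not_not, card_univ, Fintype.card_fin] at h
  rw [domCard]
  omega

end

open scoped Classical in
theorem stmt16 (n : ℕ) :
    (n + 1) * Nat.card (PInj n)
      = ∑ α : PInj (n + 1),
          if Nilpotent (n + 1) α then (n + 1) - domCard (n + 1) α else 0 := by
  calc (n + 1) * Nat.card (PInj n)
      = ∑ x : Fin (n + 1), #(univ.filter fun α : PInj (n + 1) =>
          Nilpotent (n + 1) α ∧ α.val x = none) := by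
        simp only [← Fintype.card_subtype, PInj.card_nilpotent_apply_eq_none, sum_const,
          card_univ, Fintype.card_fin, smul_eq_mul, Nat.card_eq_fintype_card]
    _ = ∑ α : PInj (n + 1), ∑ x : Fin (n + 1),
          if Nilpotent (n + 1) α ∧ α.val x = none then 1 else 0 := by
        simp only [card_filter]
        exact sum_comm
    _ = _ := by
        refine sum_congr rfl fun α _ => ?_
        rw [sub_domCard_eq_card_filter, card_filter]
        split_ifs with h <;> simp [h]
end

section
/- Let T_n be the number of nilpotent elements of IS_n. Then |IS_n| = sum over k from 0 to n of [n]_k * T_{n-k}, where [n]_k = n!/(n-k)! and T_0 = 1. -/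
/-!
Call `x` recurrent for a partial injection `α` if every power of `α` is defined at `x`. Then `α`
maps the set `A` of its recurrent points into itself, hence bijectively onto itself (`α` is
injective and `A` finite); so no point outside `A` is sent into `A`, and `α` splits into a
permutation of `A` and a partial injection of the complement without recurrent points, which on a
finite set means nilpotent. Conversely such a pair glues back to a partial injection with recurrent
set exactly `A`. Hence `|A|! * T_{n - |A|}` partial injections have recurrent set `A`, and grouping
the sets `A` by size gives `binom(n, k) * k! = [n]_k`.
-/

open Finset Function

variable {σ τ : Type*}

abbrev PartialInj (σ : Type*) :=
  {f : σ → Option σ // ∀ a b c, f a = some c → f b = some c → a = b}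

def IsRecurrent (f : σ → Option σ) (x : σ) : Prop :=
  ∀ k, (Option.bind · f)^[k] (some x) ≠ none

theorem iterMap_eq_iterate {n : ℕ} (f : Fin n → Option (Fin n)) (k : ℕ) (x : Fin n) :
    iterMap n f k x = (Option.bind · f)^[k] (some x) := by
  suffices h : ∀ o : Option (Fin n), (Option.bind · f)^[k] o = o.bind (iterMap n f k) from
    (h (some x)).symm
  induction k with
  | zero => intro o; cases o <;> rfl
  | succ k ih => intro o; rw [iterate_succ_apply, ih, Option.bind_assoc]; rfl

theorem isRecurrent_iff_of_map_eq {f : σ → Option σ} {g : τ → Option τ} {h : σ → τ}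
    (hfg : ∀ x, (f x).map h = g (h x)) (x : σ) : IsRecurrent g (h x) ↔ IsRecurrent f x := by
  have hconj : Semiconj (Option.map h) (Option.bind · f) (Option.bind · g) := by
    rintro (_ | y)
    · rfl
    · exact hfg y
  refine forall_congr' fun k => ?_
  rw [← Option.map_some, ← hconj.iterate_right k, Ne, Option.map_eq_none_iff]

theorem isRecurrent_some_comp (p : σ → σ) (x : σ) : IsRecurrent (some ∘ p) x := fun k => by
  rw [← (show Semiconj some p (Option.bind · (some ∘ p)) from fun _ => rfl).iterate_right k]
  exact Option.some_ne_none _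

theorem IsRecurrent.exists_apply_eq_some {f : σ → Option σ} {x : σ} (hx : IsRecurrent f x) :
    ∃ y, f x = some y ∧ IsRecurrent f y := by
  obtain ⟨y, hy⟩ := Option.ne_none_iff_exists'.mp (hx 1)
  exact ⟨y, hy, fun k => by
    have := hx (k + 1)
    rw [iterate_succ_apply] at this
    exact hy ▸ this⟩

theorem exists_iterate_eq_none_iff [Finite σ] (f : σ → Option σ) :
    (∃ k, 0 < k ∧ ∀ x, (Option.bind · f)^[k] (some x) = none) ↔
      ∀ x, ¬IsRecurrent f x := by
  refine ⟨fun ⟨k, _, hk⟩ x hx => hx k (hk x), fun h => ?_⟩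
  have := Fintype.ofFinite σ
  choose k hk using fun x => not_forall_not.mp (h x)
  refine ⟨univ.sup k + 1, Nat.succ_pos _, fun x => ?_⟩
  obtain ⟨j, hj⟩ :=
    Nat.exists_eq_add_of_le' (Nat.le_add_right_of_le (le_sup (f := k) (mem_univ x)))
  rw [hj, iterate_add_apply, hk x, iterate_fixed rfl]

theorem nilpotent_iff_forall_not_isRecurrent {n : ℕ} (α : PInj n) :
    Nilpotent n α ↔ ∀ x, ¬IsRecurrent α.val x := by
  simp only [Nilpotent, iterMap_eq_iterate]
  exact exists_iterate_eq_none_iff _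

theorem isPartialInj_of_map_eq {f : σ → Option σ} {g : τ → Option τ} {h : τ → σ}
    (hh : Injective h) (hgf : ∀ y, (g y).map h = f (h y))
    (hf : ∀ a b c, f a = some c → f b = some c → a = b) :
    ∀ a b c, g a = some c → g b = some c → a = b := fun a b c ha hb =>
  hh <| hf _ _ (h c) (by rw [← hgf, ha, Option.map_some]) (by rw [← hgf, hb, Option.map_some])

def PartialInj.congr (e : σ ≃ τ) : PartialInj σ ≃ PartialInj τ :=
  (e.arrowCongr e.optionCongr).subtypeEquiv fun f =>
    ⟨isPartialInj_of_map_eq e.symm.injective fun y => by simp [Option.map_map],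
      isPartialInj_of_map_eq e.injective fun x => by simp⟩

theorem card_nilpotent_congr (e : σ ≃ τ) :
    Nat.card {f : PartialInj σ // ∀ x, ¬IsRecurrent f.1 x} =
      Nat.card {g : PartialInj τ // ∀ y, ¬IsRecurrent g.1 y} :=
  Nat.card_congr <| (PartialInj.congr e).subtypeEquiv fun f => e.forall_congr fun x =>
    not_congr (isRecurrent_iff_of_map_eq (fun x => by simp [PartialInj.congr]) x).symm

/-- `T_m`; on a finite type, having no recurrent point is nilpotency
(`exists_iterate_eq_none_iff`). -/
noncomputable def nilpotentCount (m : ℕ) : ℕ :=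
  Nat.card {g : PartialInj (Fin m) // ∀ x, ¬IsRecurrent g.1 x}

open Classical in
noncomputable def recurrentSet [Fintype σ] (f : σ → Option σ) : Finset σ :=
  univ.filter (IsRecurrent f)

theorem mem_recurrentSet [Fintype σ] {f : σ → Option σ} {x : σ} :
    x ∈ recurrentSet f ↔ IsRecurrent f x := by
  simp [recurrentSet]

section Glue

variable [DecidableEq σ] {A : Finset σ}

def glue (π : Equiv.Perm A) (g : PartialInj {x // x ∉ A}) (x : σ) : Option σ :=
  if hx : x ∈ A then some (π ⟨x, hx⟩).1 else (g.1 ⟨x, hx⟩).map Subtype.val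

variable {π : Equiv.Perm A} {g : PartialInj {x // x ∉ A}}

theorem glue_of_mem {x : σ} (hx : x ∈ A) : glue π g x = some (π ⟨x, hx⟩).1 := dif_pos hx

theorem glue_of_not_mem {x : σ} (hx : x ∉ A) : glue π g x = (g.1 ⟨x, hx⟩).map Subtype.val :=
  dif_neg hx

theorem mem_iff_of_glue_eq_some {x y : σ} (hxy : glue π g x = some y) : y ∈ A ↔ x ∈ A := by
  by_cases hx : x ∈ A
  · rw [glue_of_mem hx, Option.some_inj] at hxy
    exact iff_of_true (hxy ▸ (π _).2) hx
  · rw [glue_of_not_mem hx, Option.map_eq_some_iff] at hxy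
    obtain ⟨z, -, rfl⟩ := hxy
    exact iff_of_false z.2 hx

theorem glue_isPartialInj : ∀ a b c, glue π g a = some c → glue π g b = some c → a = b := by
  intro a b c ha hb
  by_cases hc : c ∈ A
  · have hπ : ∀ x (hx : x ∈ A), glue π g x = some c → π ⟨x, hx⟩ = ⟨c, hc⟩ :=
      fun x hx h => Subtype.ext <| Option.some_injective _ <| (glue_of_mem hx).symm.trans h
    exact congrArg Subtype.val <| π.injective <|
      (hπ a ((mem_iff_of_glue_eq_some ha).mp hc) ha).trans
        (hπ b ((mem_iff_of_glue_eq_some hb).mp hc) hb).symm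
  · have hg : ∀ x (hx : x ∉ A), glue π g x = some c → g.1 ⟨x, hx⟩ = some ⟨c, hc⟩ :=
      fun x hx h => Option.map_injective Subtype.val_injective <| (glue_of_not_mem hx).symm.trans h
    exact congrArg Subtype.val <| g.2 _ _ _ (hg a ((mem_iff_of_glue_eq_some ha).not.mp hc) ha)
      (hg b ((mem_iff_of_glue_eq_some hb).not.mp hc) hb)

theorem recurrentSet_glue [Fintype σ] (hg : ∀ s, ¬IsRecurrent g.1 s) :
    recurrentSet (glue π g) = A := by
  ext x
  rw [mem_recurrentSet]
  by_cases hx : x ∈ A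
  · refine iff_of_true ?_ hx
    exact (isRecurrent_iff_of_map_eq (f := some ∘ π) (h := Subtype.val)
      (fun a => (glue_of_mem a.2).symm) ⟨x, hx⟩).mpr (isRecurrent_some_comp π _)
  · refine iff_of_false ?_ hx
    exact (isRecurrent_iff_of_map_eq (f := g.1) (h := Subtype.val)
      (fun s => (glue_of_not_mem s.2).symm) ⟨x, hx⟩).not.mpr (hg _)

end Glue

section Decomposition

variable [Fintype σ] {A : Finset σ} {f : PartialInj σ}

theorem exists_apply_eq_some_of_recurrentSet_eq (hA : recurrentSet f.1 = A) (a : A) :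
    ∃ b : A, f.1 a = some b.1 := by
  have ha : IsRecurrent f.1 a := mem_recurrentSet.mp (by rw [hA]; exact a.2)
  obtain ⟨b, hb, hrec⟩ := ha.exists_apply_eq_some
  exact ⟨⟨b, hA ▸ mem_recurrentSet.mpr hrec⟩, hb⟩

noncomputable def permPart (hA : recurrentSet f.1 = A) : Equiv.Perm A :=
  Equiv.ofBijective (fun a => Classical.choose (exists_apply_eq_some_of_recurrentSet_eq hA a)) <|
    Finite.injective_iff_bijective.mp fun a b hab => Subtype.ext <| f.2 a b _
      (Classical.choose_spec (exists_apply_eq_some_of_recurrentSet_eq hA a))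
      (hab ▸ Classical.choose_spec (exists_apply_eq_some_of_recurrentSet_eq hA b))

theorem apply_eq_some_permPart (hA : recurrentSet f.1 = A) (a : A) :
    f.1 a = some (permPart hA a).1 :=
  Classical.choose_spec (exists_apply_eq_some_of_recurrentSet_eq hA a)

theorem mem_iff_of_apply_eq_some (hA : recurrentSet f.1 = A) {x y : σ} (hxy : f.1 x = some y) :
    y ∈ A ↔ x ∈ A := by
  refine ⟨fun hy => ?_, fun hx => ?_⟩
  · obtain ⟨z, hz⟩ := (permPart hA).surjective ⟨y, hy⟩
    have hzx : (z : σ) = x := f.2 _ _ _ (by rw [apply_eq_some_permPart hA, hz]) hxy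
    exact hzx ▸ z.2
  · have hy := apply_eq_some_permPart hA ⟨x, hx⟩
    rw [hxy, Option.some_inj] at hy
    exact hy ▸ (permPart hA _).2

def nilPart (hA : recurrentSet f.1 = A) : PartialInj {x // x ∉ A} :=
  ⟨fun s => (f.1 s).attachWith (· ∉ A) fun _ hy =>
      (mem_iff_of_apply_eq_some hA hy).not.mpr s.2,
    isPartialInj_of_map_eq Subtype.val_injective (fun _ => Option.unattach_attachWith) f.2⟩

theorem map_val_nilPart (hA : recurrentSet f.1 = A) (s : {x // x ∉ A}) :
    ((nilPart hA).1 s).map Subtype.val = f.1 s :=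
  Option.unattach_attachWith

theorem not_isRecurrent_nilPart (hA : recurrentSet f.1 = A) (s : {x // x ∉ A}) :
    ¬IsRecurrent (nilPart hA).1 s := by
  rw [← isRecurrent_iff_of_map_eq (map_val_nilPart hA), ← mem_recurrentSet, hA]
  exact s.2

variable (A) in
noncomputable def recurrentSetFiberEquiv [DecidableEq σ] :
    {f : PartialInj σ // recurrentSet f.1 = A} ≃
      Equiv.Perm A × {g : PartialInj {x // x ∉ A} // ∀ s, ¬IsRecurrent g.1 s} where
  toFun f := (permPart f.2, ⟨nilPart f.2, not_isRecurrent_nilPart f.2⟩)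
  invFun p := ⟨⟨glue p.1 p.2.1, glue_isPartialInj⟩, recurrentSet_glue p.2.2⟩
  left_inv f := by
    ext x : 3
    by_cases hx : x ∈ A
    · exact (glue_of_mem hx).trans (apply_eq_some_permPart f.2 ⟨x, hx⟩).symm
    · exact (glue_of_not_mem hx).trans (map_val_nilPart f.2 ⟨x, hx⟩)
  right_inv p := by
    refine Prod.ext (Equiv.ext fun a => Subtype.ext ?_)
      (Subtype.ext (Subtype.ext (funext fun s => ?_)))
    · exact Option.some_injective _ <|
        (apply_eq_some_permPart (recurrentSet_glue p.2.2) a).symm.trans (glue_of_mem a.2)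
    · exact Option.map_injective Subtype.val_injective <|
        (map_val_nilPart (recurrentSet_glue p.2.2) s).trans (glue_of_not_mem s.2)

theorem card_fiber (A : Finset σ) :
    Nat.card {f : PartialInj σ // recurrentSet f.1 = A} =
      (#A).factorial * nilpotentCount (Fintype.card σ - #A) := by
  classical
  have e : {x // x ∉ A} ≃ Fin (Fintype.card σ - #A) :=
    Fintype.equivFinOfCardEq (by rw [Fintype.card_subtype_compl, Fintype.card_coe])
  rw [Nat.card_congr (recurrentSetFiberEquiv A), Nat.card_prod, Nat.card_perm,
    Nat.card_eq_finsetCard, nilpotentCount, card_nilpotent_congr e]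

end Decomposition

variable (σ) in
theorem card_partialInj [Fintype σ] :
    Nat.card (PartialInj σ) = ∑ k ∈ range (Fintype.card σ + 1),
      (Fintype.card σ).descFactorial k * nilpotentCount (Fintype.card σ - k) := by
  calc Nat.card (PartialInj σ)
      = ∑ A : Finset σ, Nat.card {f : PartialInj σ // recurrentSet f.1 = A} := by
        rw [← Nat.card_sigma, Nat.card_congr (Equiv.sigmaFiberEquiv _)]
    _ = ∑ A : Finset σ, (#A).factorial * nilpotentCount (Fintype.card σ - #A) :=
        sum_congr rfl fun A _ => card_fiber A
    _ = _ := by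
        rw [← powerset_univ, sum_powerset_apply_card
          (fun k => k.factorial * nilpotentCount (Fintype.card σ - k)) (x := (univ : Finset σ)),
          card_univ]
        refine sum_congr rfl fun k _ => ?_
        rw [smul_eq_mul, Nat.descFactorial_eq_factorial_mul_choose]
        ring

theorem ncard_setOf_nilpotent (m : ℕ) :
    Set.ncard {α : PInj m | Nilpotent m α} = nilpotentCount m :=
  (Nat.card_coe_set_eq _).symm.trans
    (Nat.card_congr (Equiv.subtypeEquivRight nilpotent_iff_forall_not_isRecurrent))

theorem stmt18 (n : ℕ) :
    Nat.card (PInj n)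
      = ∑ k ∈ Finset.range (n + 1),
          n.descFactorial k * Set.ncard {α : PInj (n - k) | Nilpotent (n - k) α} := by
  have hPInj : Nat.card (PInj n) = Nat.card (PartialInj (Fin n)) := rfl
  rw [hPInj, card_partialInj, Fintype.card_fin]
  simp only [ncard_setOf_nilpotent]
end

section
/- For every n ≥ 1: sum over k from 0 to n of (-1)^k * |IS_{n-k}| * binom(n,k)^2 * k! = 1, where |IS_m| = sum_j binom(m,j)^2 * j!. -/
/- `R_{n,k} = binom(n,k)^2 k!` counts the partial injections of rank `k`. Choosing the rank-`k`
part of a rank-`(k+j)` map gives `R_{n,k} R_{n-k,j} = binom(k+j,k) R_{n,k+j}`, so the alternating sum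
regroups by total rank `m` into `∑_m R_{n,m} ∑_k (-1)^k binom(m,k)`, and only `m = 0` survives. -/

open Finset

def rankCount (n k : ℕ) : ℕ := n.choose k ^ 2 * k.factorial

lemma cardIS_eq_sum_rankCount (m : ℕ) : cardIS m = ∑ j ∈ range (m + 1), rankCount m j := rfl

lemma rankCount_mul_rankCount_sub (n k j : ℕ) :
    rankCount n k * rankCount (n - k) j = (k + j).choose k * rankCount n (k + j) := by
  have hchoose : n.choose (k + j) * (k + j).choose k = n.choose k * (n - k).choose j := by
    simpa using Nat.choose_mul (n := n) (Nat.le_add_right k j)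
  have hfact : (k + j).choose k * k.factorial * j.factorial = (k + j).factorial := by
    simpa using Nat.choose_mul_factorial_mul_factorial (Nat.le_add_right k j)
  calc rankCount n k * rankCount (n - k) j
      = (n.choose k * (n - k).choose j) ^ 2 * (k.factorial * j.factorial) := by
        unfold rankCount; ring
    _ = (n.choose (k + j) * (k + j).choose k) ^ 2 * (k.factorial * j.factorial) := by
        rw [hchoose]
    _ = (k + j).choose k * rankCount n (k + j) := by
        unfold rankCount; rw [← hfact]; ring

lemma sum_sum_neg_one_pow_mul_choose_mul {R : Type*} [CommRing R] (a : ℕ → R) (n : ℕ) :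
    ∑ k ∈ range (n + 1), ∑ j ∈ range (n + 1 - k), (-1) ^ k * ((k + j).choose k : R) * a (k + j)
      = a 0 := by
  have halternating (m : ℕ) :
      ∑ k ∈ range (m + 1), (-1) ^ k * (m.choose k : R) = if m = 0 then 1 else 0 := by
    have := congrArg (Int.cast : ℤ → R) (Int.alternating_sum_range_choose (n := m))
    push_cast at this
    simpa using this
  rw [← sum_range_diag_flip]
  calc ∑ m ∈ range (n + 1), ∑ k ∈ range (m + 1),
          (-1) ^ k * ((k + (m - k)).choose k : R) * a (k + (m - k))
      = ∑ m ∈ range (n + 1), (∑ k ∈ range (m + 1), (-1) ^ k * (m.choose k : R)) * a m := by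
        refine sum_congr rfl fun m _ => ?_
        rw [sum_mul]
        refine sum_congr rfl fun k hk => ?_
        rw [Nat.add_sub_cancel' (Nat.lt_succ_iff.mp (mem_range.mp hk))]
    _ = a 0 := by simp [halternating]

theorem stmt19_general (n : ℕ) :
    ∑ k ∈ Finset.range (n + 1),
        (-1 : ℤ) ^ k * (cardIS (n - k) : ℤ) * (((n.choose k) ^ 2 * k.factorial : ℕ) : ℤ)
      = 1 := by
  calc _ = ∑ k ∈ range (n + 1), ∑ j ∈ range (n + 1 - k),
          (-1) ^ k * ((k + j).choose k : ℤ) * (rankCount n (k + j) : ℤ) := by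
        refine sum_congr rfl fun k hk => ?_
        change (-1 : ℤ) ^ k * (cardIS (n - k) : ℤ) * (rankCount n k : ℤ) = _
        rw [cardIS_eq_sum_rankCount, ← Nat.sub_add_comm (mem_range_succ_iff.mp hk),
          Nat.cast_sum, mul_sum, sum_mul]
        refine sum_congr rfl fun j _ => ?_
        have hj := congrArg (Nat.cast : ℕ → ℤ) (rankCount_mul_rankCount_sub n k j)
        push_cast at hj
        linear_combination (-1) ^ k * hj
    _ = 1 := by
        rw [sum_sum_neg_one_pow_mul_choose_mul (fun m => (rankCount n m : ℤ))]
        simp [rankCount]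

theorem stmt19 (n : ℕ) (h : 1 ≤ n) :
    ∑ k ∈ Finset.range (n + 1),
        (-1 : ℤ) ^ k * (cardIS (n - k) : ℤ) * (((n.choose k) ^ 2 * k.factorial : ℕ) : ℤ)
      = 1 :=
  stmt19_general n
end
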